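/- arXiv:2207.02920 — 7 statements merged into one kernel-verified Lean document; each statement's English description precedes it below -/
import Mathlib

section
/- For all n ≥ 4, the Erdős–Gyárfás function satisfies f(n, 4, 5) ≥ (5/6)(n − 1); that is, every edge-coloring of the complete graph K_n in which every 4-element vertex set spans at least 5 distinct colors must use at least (5/6)(n − 1) colors. -/
/-- The set of colors spanned by a vertex subset `S` under the edge-coloring `χ`. -/
def spannedColors {n : ℕ} (χ : Fin n → Fin n → ℕ) (S : Finset (Fin n)) : Finset ℕ :=
  ((S ×ˢ S).filter (fun e => e.1 ≠ e.2)).image (fun e => χ e.1 e.2)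

/-- `χ` is a `(p, q)`-coloring of `K_n`: it is symmetric (a coloring of unordered pairs)
and every `p`-element vertex set spans at least `q` distinct colors. -/
def IsPQColoring (n p q : ℕ) (χ : Fin n → Fin n → ℕ) : Prop :=
  (∀ i j, χ i j = χ j i) ∧
  ∀ S : Finset (Fin n), S.card = p → q ≤ (spannedColors χ S).card

/-- The set of colors used by `χ` on the edges of `K_n`. -/
def usedColors {n : ℕ} (χ : Fin n → Fin n → ℕ) : Finset ℕ :=
  ((Finset.univ : Finset (Fin n × Fin n)).filter (fun e => e.1 ≠ e.2)).image
    (fun e => χ e.1 e.2)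

/-- The Erdős–Gyárfás function `f(n, p, q)`: the minimum number of colors in a
`(p, q)`-coloring of `K_n`. -/
noncomputable def erdosGyarfas (n p q : ℕ) : ℕ :=
  sInf {m : ℕ | ∃ χ : Fin n → Fin n → ℕ, IsPQColoring n p q χ ∧ (usedColors χ).card = m}

/-!
Call `(y, z)` a monochromatic angle at `x` if `y ≠ z` and the edges `xy`, `xz` have the same
color. The `n - 1` edges at `x` show at least `n - 1 - aₓ / 2` colors, where `aₓ` counts these
ordered angles, so `2n(n - 1) ≤ 2n · #colors + ∑ aₓ`.

Every four points spanning five colors makes angles rigid: a color occurs at most twice at a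
vertex, there is no monochromatic triangle, a base `yz` has only one apex, and neither the color
of a leg nor the color of a base reappears at an endpoint. Hence the ordered pairs `(x, y)`,
`(y, x)`, `(y, z)` attached to the ordered angles `(y, z)` at `x` are pairwise distinct, so
`3 ∑ aₓ ≤ n(n - 1)`, and together `5(n - 1) ≤ 6 · #colors`.
-/

open Finset

theorem Finset.two_mul_card_le_two_mul_card_image_add {α β : Type*} [DecidableEq α]
    [DecidableEq β] (s : Finset α) (f : α → β) :
    2 * #s ≤ 2 * #(s.image f) + #(s.offDiag.filter fun p => f p.1 = f p.2) := by
  have hpairs : #(s.offDiag.filter fun p => f p.1 = f p.2) =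
      ∑ b ∈ s.image f, #({a ∈ s | f a = b}.offDiag) := by
    rw [card_eq_sum_card_fiberwise (f := fun p => f p.1) (t := s.image f)
      fun p hp => mem_image_of_mem f (mem_offDiag.1 (mem_filter.1 hp).1).1]
    refine sum_congr rfl fun b _ => congrArg card ?_
    ext ⟨x, y⟩
    simp only [mem_filter, mem_offDiag]
    grind
  rw [card_eq_sum_card_image f s, card_eq_sum_ones (s.image f), hpairs, mul_sum, mul_sum,
    ← sum_add_distrib]
  refine sum_le_sum fun b _ => ?_
  rw [offDiag_card]
  -- `2k ≤ 2 + k(k - 1)` is `(k - 1)(k - 2) ≥ 0`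
  generalize #{a ∈ s | f a = b} = k
  have := Nat.le_mul_self k
  rcases Nat.lt_or_ge k 2 with hk | hk
  · interval_cases k <;> simp
  · have : 3 * k ≤ 2 + k * k := by nlinarith
    omega

theorem Finset.disjoint_image_image {α β : Type*} [DecidableEq β] {s : Finset α}
    {f g : α → β} (h : ∀ a ∈ s, ∀ b ∈ s, f a ≠ g b) :
    Disjoint (s.image f) (s.image g) := by
  simp only [disjoint_left, mem_image]
  rintro _ ⟨a, ha, rfl⟩ ⟨b, hb, hab⟩
  exact h a ha b hb hab.symm

theorem exists_ne_ne_ne_of_three_lt_card {α : Type*} [Fintype α] [DecidableEq α]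
    (h : 3 < Fintype.card α) (a b c : α) : ∃ d, d ≠ a ∧ d ≠ b ∧ d ≠ c := by
  obtain ⟨d, -, hd⟩ := exists_mem_notMem_of_card_lt_card (s := {a, b, c})
    (card_le_three.trans_lt (by rwa [card_univ]))
  simp only [mem_insert, mem_singleton, not_or] at hd
  exact ⟨d, hd⟩

variable {n : ℕ}

theorem spannedColors_eq_image_offDiag (χ : Fin n → Fin n → ℕ) (S : Finset (Fin n)) :
    spannedColors χ S = S.offDiag.image fun e => χ e.1 e.2 := by
  rw [spannedColors]
  congr 1
  ext
  simp [mem_offDiag, and_assoc]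

noncomputable def rainbowColoring (n : ℕ) : Fin n → Fin n → ℕ :=
  fun i j => Fintype.equivFin (Sym2 (Fin n)) s(i, j)

theorem isPQColoring_rainbowColoring {p q : ℕ} (hq : q ≤ p * (p - 1) / 2) :
    IsPQColoring n p q (rainbowColoring n) := by
  refine ⟨fun i j => by simp only [rainbowColoring, Sym2.eq_swap], fun S hS => hq.trans ?_⟩
  rw [spannedColors_eq_image_offDiag]
  refine Nat.div_le_of_le_mul ?_
  rw [Nat.mul_sub_one, ← hS, ← offDiag_card]
  refine card_le_mul_card_image _ 2 fun k hk => ?_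
  obtain ⟨⟨i, j⟩, -, rfl⟩ := mem_image.1 hk
  calc #{e ∈ S.offDiag | rainbowColoring n e.1 e.2 = rainbowColoring n i j}
      ≤ #({(i, j), (j, i)} : Finset (Fin n × Fin n)) := by
        refine card_le_card fun e he => ?_
        have hmk : s(e.1, e.2) = s(i, j) :=
          (Fintype.equivFin _).injective (Fin.ext (mem_filter.1 he).2)
        rcases Sym2.eq_iff.1 hmk with ⟨h₁, h₂⟩ | ⟨h₁, h₂⟩ <;>
          simp [Prod.ext_iff, h₁, h₂]
    _ ≤ 2 := card_le_two

theorem exists_isPQColoring_card_usedColors_eq_erdosGyarfas {p q : ℕ}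
    (hq : q ≤ p * (p - 1) / 2) :
    ∃ χ, IsPQColoring n p q χ ∧ #(usedColors χ) = erdosGyarfas n p q :=
  Nat.sInf_mem (s := {m | ∃ χ, IsPQColoring n p q χ ∧ #(usedColors χ) = m})
    ⟨_, _, isPQColoring_rainbowColoring hq, rfl⟩

def monoAngles (χ : Fin n → Fin n → ℕ) (x : Fin n) : Finset (Fin n × Fin n) :=
  (univ.erase x).offDiag.filter fun p => χ x p.1 = χ x p.2

variable {χ : Fin n → Fin n → ℕ} {a b c d : Fin n}

theorem mem_monoAngles :
    (b, c) ∈ monoAngles χ a ↔ b ≠ a ∧ c ≠ a ∧ b ≠ c ∧ χ a b = χ a c := by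
  simp [monoAngles, mem_offDiag, and_assoc]

theorem mem_monoAngles_swap (h : (b, c) ∈ monoAngles χ a) : (c, b) ∈ monoAngles χ a := by
  obtain ⟨hba, hca, hbc, hcol⟩ := mem_monoAngles.1 h
  exact mem_monoAngles.2 ⟨hca, hba, hbc.symm, hcol.symm⟩

theorem two_mul_pred_le_two_mul_card_usedColors_add (χ : Fin n → Fin n → ℕ) (x : Fin n) :
    2 * (n - 1) ≤ 2 * #(usedColors χ) + #(monoAngles χ x) := by
  have h := (univ.erase x).two_mul_card_le_two_mul_card_image_add (χ x)
  rw [card_erase_of_mem (mem_univ x), card_univ, Fintype.card_fin] at h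
  have himage : (univ.erase x).image (χ x) ⊆ usedColors χ := by
    simp only [subset_iff, mem_image, mem_erase, mem_univ, and_true, usedColors, mem_filter,
      true_and]
    rintro _ ⟨y, hyx, rfl⟩
    exact ⟨(x, y), hyx.symm, rfl⟩
  have := card_le_card himage
  rw [monoAngles]
  omega

/-- The angle `⟨x, (y, z)⟩` has apex `x`; its legs are `xy`, `xz` and its base is `yz`. -/
def angleLeg (t : Σ _ : Fin n, Fin n × Fin n) : Fin n × Fin n := (t.1, t.2.1)

def angleBase (t : Σ _ : Fin n, Fin n × Fin n) : Fin n × Fin n := t.2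

namespace IsPQColoring

variable (hχ : IsPQColoring n 4 5 χ)
include hχ

theorem angle_colors_nodup (h : (b, c) ∈ monoAngles χ a) (hda : d ≠ a) (hdb : d ≠ b)
    (hdc : d ≠ c) : [χ a b, χ a d, χ b c, χ b d, χ c d].Nodup := by
  obtain ⟨hba, hca, hbc, hcol⟩ := mem_monoAngles.1 h
  have hS : #({a, b, c, d} : Finset (Fin n)) = 4 :=
    card_eq_four.2 ⟨a, b, c, d, hba.symm, hca.symm, hda.symm, hbc, hdb.symm, hdc.symm, rfl⟩
  have hsub :
      spannedColors χ {a, b, c, d} ⊆ [χ a b, χ a d, χ b c, χ b d, χ c d].toFinset := by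
    rw [spannedColors_eq_image_offDiag, image_subset_iff]
    rintro ⟨u, v⟩ huv
    simp only [mem_offDiag, mem_insert, mem_singleton] at huv
    obtain ⟨hu, hv, huv⟩ := huv
    simp only [List.mem_toFinset, List.mem_cons, List.not_mem_nil, or_false]
    rcases hu with rfl | rfl | rfl | rfl <;> rcases hv with rfl | rfl | rfl | rfl <;>
      first
        | exact absurd rfl huv
        | tauto
        | (rw [hχ.1]; tauto)
  rw [← Multiset.coe_nodup, ← Multiset.toFinset_card_eq_card_iff_nodup]
  exact le_antisymm (List.toFinset_card_le _) ((hχ.2 _ hS).trans (card_le_card hsub))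

theorem apex_color_ne (h : (b, c) ∈ monoAngles χ a) (hda : d ≠ a) (hdb : d ≠ b)
    (hdc : d ≠ c) : χ a d ≠ χ a b := fun heq => by
  simpa [heq] using hχ.angle_colors_nodup h hda hdb hdc

theorem eq_of_mem_monoAngles (h : (b, c) ∈ monoAngles χ a) (h' : (b, c) ∈ monoAngles χ d) :
    d = a := by
  by_contra hda
  obtain ⟨hbd, hcd, -, hcol⟩ := mem_monoAngles.1 h'
  have := hχ.angle_colors_nodup h hda hbd.symm hcd.symm
  rw [hχ.1 b d, hχ.1 c d, hcol] at this
  simp at this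

theorem injOn_angleLeg : Set.InjOn (angleLeg (n := n)) ↑(univ.sigma (monoAngles χ)) := by
  rintro ⟨x, y, z⟩ ht ⟨x', y', z'⟩ ht' heq
  simp only [angleLeg, Prod.mk.injEq] at heq
  obtain ⟨rfl, rfl⟩ := heq
  replace ht := (mem_sigma.1 ht).2
  obtain ⟨-, hz'x, hz'y, hcol⟩ := mem_monoAngles.1 (mem_sigma.1 ht').2
  by_contra hne
  exact hχ.apex_color_ne ht hz'x hz'y.symm (fun h => hne (by rw [h])) hcol.symm

theorem injOn_angleBase : Set.InjOn (angleBase (n := n)) ↑(univ.sigma (monoAngles χ)) := by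
  rintro ⟨x, y, z⟩ ht ⟨x', y', z'⟩ ht' heq
  simp only [angleBase, Prod.mk.injEq] at heq
  obtain ⟨rfl, rfl⟩ := heq
  rw [hχ.eq_of_mem_monoAngles (a := x) (d := x') (mem_sigma.1 ht).2 (mem_sigma.1 ht').2]

variable (hn : 4 ≤ n)
include hn

theorem base_color_ne_leg_color (h : (b, c) ∈ monoAngles χ a) : χ b c ≠ χ a b := by
  intro heq
  obtain ⟨d, hda, hdb, hdc⟩ :=
    exists_ne_ne_ne_of_three_lt_card (by rwa [Fintype.card_fin]) a b c
  simpa [heq] using hχ.angle_colors_nodup h hda hdb hdc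

theorem leg_color_ne (h : (b, c) ∈ monoAngles χ a) (hda : d ≠ a) (hdb : d ≠ b) :
    χ b d ≠ χ a b := by
  rcases eq_or_ne d c with rfl | hdc
  · exact hχ.base_color_ne_leg_color hn h
  · exact fun heq => by simpa [heq] using hχ.angle_colors_nodup h hda hdb hdc

theorem base_color_ne (h : (b, c) ∈ monoAngles χ a) (hdb : d ≠ b) (hdc : d ≠ c) :
    χ b d ≠ χ b c := by
  rcases eq_or_ne d a with rfl | hda
  · rw [hχ.1]
    exact (hχ.base_color_ne_leg_color hn h).symm
  · exact fun heq => by simpa [heq] using hχ.angle_colors_nodup h hda hdb hdc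

theorem disjoint_image_angleLeg_swap :
    Disjoint ((univ.sigma (monoAngles χ)).image angleLeg)
      ((univ.sigma (monoAngles χ)).image (Prod.swap ∘ angleLeg)) := by
  refine disjoint_image_image ?_
  rintro ⟨x, y, z⟩ ht ⟨x', y', z'⟩ ht' heq
  simp only [angleLeg, Function.comp, Prod.swap, Prod.mk.injEq] at heq
  obtain ⟨rfl, rfl⟩ := heq
  obtain ⟨-, hz'y, hxz', hcol⟩ := mem_monoAngles.1 (mem_sigma.1 ht').2
  exact hχ.leg_color_ne hn (mem_sigma.1 ht).2 hxz'.symm hz'y (by rw [← hcol, hχ.1])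

theorem disjoint_image_angleLeg_angleBase :
    Disjoint ((univ.sigma (monoAngles χ)).image angleLeg)
      ((univ.sigma (monoAngles χ)).image angleBase) := by
  refine disjoint_image_image ?_
  rintro ⟨x, y, z⟩ ht ⟨w, y', z'⟩ ht' heq
  simp only [angleLeg, angleBase, Prod.mk.injEq] at heq
  obtain ⟨rfl, rfl⟩ := heq
  obtain ⟨-, hzx, hyz, hcol⟩ := mem_monoAngles.1 (mem_sigma.1 ht).2
  exact hχ.base_color_ne hn (mem_sigma.1 ht').2 hzx hyz.symm hcol.symm

theorem disjoint_image_angleLeg_swap_angleBase :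
    Disjoint ((univ.sigma (monoAngles χ)).image (Prod.swap ∘ angleLeg))
      ((univ.sigma (monoAngles χ)).image angleBase) := by
  refine disjoint_image_image ?_
  rintro ⟨x, y, z⟩ ht ⟨w, y', z'⟩ ht' heq
  simp only [angleLeg, angleBase, Function.comp, Prod.swap, Prod.mk.injEq] at heq
  obtain ⟨rfl, rfl⟩ := heq
  obtain ⟨-, hzx, hyz, hcol⟩ := mem_monoAngles.1 (mem_sigma.1 ht).2
  exact hχ.base_color_ne hn (mem_monoAngles_swap (mem_sigma.1 ht').2) hzx hyz.symm hcol.symm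

theorem three_mul_sum_card_monoAngles_le : 3 * ∑ x, #(monoAngles χ x) ≤ n * n - n := by
  set T := univ.sigma (monoAngles χ)
  have hsub : T.image angleLeg ∪ T.image (Prod.swap ∘ angleLeg) ∪ T.image angleBase ⊆
      univ.offDiag := by
    simp only [union_subset_iff, image_subset_iff, mem_offDiag, mem_univ, true_and]
    refine ⟨⟨?_, ?_⟩, ?_⟩ <;> rintro ⟨x, y, z⟩ ht <;>
      obtain ⟨hyx, -, hyz, -⟩ := mem_monoAngles.1 (mem_sigma.1 ht).2
    exacts [hyx.symm, hyx, hyz]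
  have := card_le_card hsub
  rw [card_union_of_disjoint (disjoint_union_left.2 ⟨hχ.disjoint_image_angleLeg_angleBase hn,
      hχ.disjoint_image_angleLeg_swap_angleBase hn⟩),
    card_union_of_disjoint (hχ.disjoint_image_angleLeg_swap hn),
    card_image_of_injOn hχ.injOn_angleLeg,
    card_image_of_injOn (Prod.swap_injective.comp_injOn hχ.injOn_angleLeg),
    card_image_of_injOn hχ.injOn_angleBase, offDiag_card, card_univ, Fintype.card_fin,
    card_sigma] at this
  omega

theorem five_mul_pred_le_six_mul_card_usedColors : 5 * (n - 1) ≤ 6 * #(usedColors χ) := by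
  have hvertex : 2 * (n * (n - 1)) ≤ 2 * (n * #(usedColors χ)) + ∑ x, #(monoAngles χ x) := by
    have := sum_le_sum fun x (_ : x ∈ univ) => two_mul_pred_le_two_mul_card_usedColors_add χ x
    simpa only [sum_add_distrib, sum_const, card_univ, Fintype.card_fin, smul_eq_mul,
      mul_left_comm n 2] using this
  have hangles := hχ.three_mul_sum_card_monoAngles_le hn
  rw [← Nat.mul_sub_one] at hangles
  refine Nat.le_of_mul_le_mul_left ?_ (by omega : 0 < n)
  nlinarith

end IsPQColoring

theorem erdosGyarfas_four_five_lower_bound :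
    ∀ n : ℕ, 4 ≤ n → (5 / 6 : ℝ) * ((n : ℝ) - 1) ≤ (erdosGyarfas n 4 5 : ℝ) := by
  intro n hn
  obtain ⟨χ, hχ, hcard⟩ :=
    exists_isPQColoring_card_usedColors_eq_erdosGyarfas (n := n) (p := 4) (q := 5) (by norm_num)
  have h : ((5 * (n - 1) : ℕ) : ℝ) ≤ (6 * erdosGyarfas n 4 5 : ℕ) := by
    exact_mod_cast hcard ▸ hχ.five_mul_pred_le_six_mul_card_usedColors hn
  push_cast [Nat.cast_sub (by omega : 1 ≤ n)] at h
  linarith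
end

section
/- Let n ≥ 4 and let χ be a (4, 5)-coloring of K_n. Then for every color c, every connected component of the graph formed by the c-colored edges has at most two edges; equivalently, there do not exist three distinct edges of K_n, all assigned the same color by χ, whose union forms a connected subgraph. -/
private lemma walk_mem_closed {α : Type*} {G : SimpleGraph α} {S : Set α}
    (hcl : ∀ ⦃x y⦄, x ∈ S → G.Adj x y → y ∈ S) :
    ∀ {u v : α}, G.Walk u v → u ∈ S → v ∈ S
  | _, _, SimpleGraph.Walk.nil, h => h
  | _, _, SimpleGraph.Walk.cons hadj p, h => walk_mem_closed hcl p (hcl h hadj)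

private lemma edge_claim {α : Type*} [DecidableEq α] {a b u v w z : α}
    (hreach : (SimpleGraph.fromEdgeSet
      ({s(a,b), s(u,v), s(w,z)} : Set (Sym2 α))).Reachable a u) :
    (({a, b} : Finset α) ∩ ({u, v, w, z} : Finset α)).Nonempty := by
  by_contra hne
  rw [Finset.not_nonempty_iff_eq_empty, Finset.eq_empty_iff_forall_notMem] at hne
  have hdisj : ∀ t : α, (t = u ∨ t = v ∨ t = w ∨ t = z) → ¬(t = a ∨ t = b) := by
    intro t ht hab
    exact hne t (by simp only [Finset.mem_inter, Finset.mem_insert, Finset.mem_singleton]; tauto)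
  have hcl : ∀ ⦃x y : α⦄, x ∈ ({a, b} : Set α) →
      (SimpleGraph.fromEdgeSet ({s(a,b), s(u,v), s(w,z)} : Set (Sym2 α))).Adj x y →
      y ∈ ({a, b} : Set α) := by
    intro x y hx hadj
    rw [SimpleGraph.fromEdgeSet_adj] at hadj
    obtain ⟨hmem, -⟩ := hadj
    have hx' : x = a ∨ x = b := hx
    simp only [Set.mem_insert_iff, Set.mem_singleton_iff] at hmem
    rcases hmem with h | h | h
    · rw [Sym2.eq_iff] at h
      rcases h with ⟨-, rfl⟩ | ⟨rfl, rfl⟩ <;> simp [Set.mem_insert_iff]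
    · exfalso
      rw [Sym2.eq_iff] at h
      rcases h with ⟨rfl, -⟩ | ⟨rfl, -⟩
      · exact hdisj x (Or.inl rfl) hx'
      · exact hdisj x (Or.inr (Or.inl rfl)) hx'
    · exfalso
      rw [Sym2.eq_iff] at h
      rcases h with ⟨rfl, -⟩ | ⟨rfl, -⟩
      · exact hdisj x (Or.inr (Or.inr (Or.inl rfl))) hx'
      · exact hdisj x (Or.inr (Or.inr (Or.inr rfl))) hx'
  obtain ⟨p⟩ := hreach
  have := walk_mem_closed hcl p (by simp)
  exact hdisj u (Or.inl rfl) this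

private lemma card_union3 {α : Type*} [DecidableEq α] {e f g : Finset α}
    (hef : (e ∩ f).Nonempty) (hg : (g ∩ (e ∪ f)).Nonempty)
    (he : e.card ≤ 2) (hf : f.card ≤ 2) (hgc : g.card ≤ 2) :
    (e ∪ f ∪ g).card ≤ 4 := by
  have h1 := Finset.card_union_add_card_inter e f
  have h2 := Finset.card_union_add_card_inter (e ∪ f) g
  have h3 : 1 ≤ (e ∩ f).card := hef.card_pos
  have h4 : 1 ≤ ((e ∪ f) ∩ g).card := by
    rw [Finset.inter_comm]; exact hg.card_pos
  omega

/-- In a (4,5)-coloring of K_n (n ≥ 4), no color class contains three distinct edges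
whose union forms a connected subgraph; equivalently every component of a color class
has at most two edges. -/
theorem no_three_connected_monochromatic_edges :
    ∀ (n : ℕ), 4 ≤ n → ∀ χ : Fin n → Fin n → ℕ, IsPQColoring n 4 5 χ →
    ¬ ∃ a₁ b₁ a₂ b₂ a₃ b₃ : Fin n,
        a₁ ≠ b₁ ∧ a₂ ≠ b₂ ∧ a₃ ≠ b₃ ∧
        s(a₁, b₁) ≠ s(a₂, b₂) ∧ s(a₁, b₁) ≠ s(a₃, b₃) ∧ s(a₂, b₂) ≠ s(a₃, b₃) ∧
        χ a₁ b₁ = χ a₂ b₂ ∧ χ a₂ b₂ = χ a₃ b₃ ∧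
        (∀ v w : Fin n,
          v ∈ ({a₁, b₁, a₂, b₂, a₃, b₃} : Finset (Fin n)) →
          w ∈ ({a₁, b₁, a₂, b₂, a₃, b₃} : Finset (Fin n)) →
          (SimpleGraph.fromEdgeSet
            ({s(a₁, b₁), s(a₂, b₂), s(a₃, b₃)} : Set (Sym2 (Fin n)))).Reachable v w) := by
  rintro n hn χ ⟨hsym, hcol⟩
  rintro ⟨a₁, b₁, a₂, b₂, a₃, b₃, h1, h2, h3, d12, d13, d23, c12, c23, hreach⟩
  have claim1 : (({a₁, b₁} : Finset (Fin n)) ∩ ({a₂, b₂, a₃, b₃} : Finset (Fin n))).Nonempty :=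
    edge_claim (hreach a₁ a₂ (by simp) (by simp))
  have claim2 : (({a₂, b₂} : Finset (Fin n)) ∩ ({a₁, b₁, a₃, b₃} : Finset (Fin n))).Nonempty := by
    have hr := hreach a₂ a₁ (by simp) (by simp)
    have hset : ({s(a₁,b₁), s(a₂,b₂), s(a₃,b₃)} : Set (Sym2 (Fin n)))
        = {s(a₂,b₂), s(a₁,b₁), s(a₃,b₃)} := by
      ext t; simp only [Set.mem_insert_iff, Set.mem_singleton_iff]; tauto
    rw [hset] at hr
    exact edge_claim hr
  have claim3 : (({a₃, b₃} : Finset (Fin n)) ∩ ({a₁, b₁, a₂, b₂} : Finset (Fin n))).Nonempty := by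
    have hr := hreach a₃ a₁ (by simp) (by simp)
    have hset : ({s(a₁,b₁), s(a₂,b₂), s(a₃,b₃)} : Set (Sym2 (Fin n)))
        = {s(a₃,b₃), s(a₁,b₁), s(a₂,b₂)} := by
      ext t; simp only [Set.mem_insert_iff, Set.mem_singleton_iff]; tauto
    rw [hset] at hr
    exact edge_claim hr
  have hc2 : ∀ x y : Fin n, ({x, y} : Finset (Fin n)).card ≤ 2 :=
    fun x y => (Finset.card_insert_le _ _).trans (by simp)
  -- the vertex set has at most 4 elements
  have hVcard : ({a₁, b₁, a₂, b₂, a₃, b₃} : Finset (Fin n)).card ≤ 4 := by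
    have hcases : ((({a₁,b₁} : Finset (Fin n)) ∩ {a₂,b₂})).Nonempty ∨
        ((({a₁,b₁} : Finset (Fin n)) ∩ {a₃,b₃})).Nonempty := by
      obtain ⟨x, hx⟩ := claim1
      simp only [Finset.mem_inter, Finset.mem_insert, Finset.mem_singleton] at hx
      rcases hx with ⟨hx1, hx2 | hx2 | hx2 | hx2⟩
      · exact Or.inl ⟨x, by
          simp only [Finset.mem_inter, Finset.mem_insert, Finset.mem_singleton]; tauto⟩
      · exact Or.inl ⟨x, by
          simp only [Finset.mem_inter, Finset.mem_insert, Finset.mem_singleton]; tauto⟩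
      · exact Or.inr ⟨x, by
          simp only [Finset.mem_inter, Finset.mem_insert, Finset.mem_singleton]; tauto⟩
      · exact Or.inr ⟨x, by
          simp only [Finset.mem_inter, Finset.mem_insert, Finset.mem_singleton]; tauto⟩
    rcases hcases with hA | hB
    · have hg : (({a₃,b₃} : Finset (Fin n)) ∩ (({a₁,b₁} : Finset (Fin n)) ∪ {a₂,b₂})).Nonempty := by
        obtain ⟨x, hx⟩ := claim3
        refine ⟨x, ?_⟩
        simp only [Finset.mem_inter, Finset.mem_union, Finset.mem_insert,
          Finset.mem_singleton] at hx ⊢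
        tauto
      have h4 := card_union3 hA hg (hc2 a₁ b₁) (hc2 a₂ b₂) (hc2 a₃ b₃)
      refine le_trans (le_of_eq ?_) h4
      congr 1
      ext t
      simp only [Finset.mem_union, Finset.mem_insert, Finset.mem_singleton]
      tauto
    · have hg : (({a₂,b₂} : Finset (Fin n)) ∩ (({a₁,b₁} : Finset (Fin n)) ∪ {a₃,b₃})).Nonempty := by
        obtain ⟨x, hx⟩ := claim2
        refine ⟨x, ?_⟩
        simp only [Finset.mem_inter, Finset.mem_union, Finset.mem_insert,
          Finset.mem_singleton] at hx ⊢
        tauto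
      have h4 := card_union3 hB hg (hc2 a₁ b₁) (hc2 a₃ b₃) (hc2 a₂ b₂)
      refine le_trans (le_of_eq ?_) h4
      congr 1
      ext t
      simp only [Finset.mem_union, Finset.mem_insert, Finset.mem_singleton]
      tauto
  -- extend to a 4-element set S
  obtain ⟨S, hVS, hS4⟩ := Finset.exists_superset_card_eq hVcard (by simpa using hn)
  -- color counting on S
  set F : Sym2 (Fin n) → ℕ := Sym2.lift ⟨χ, hsym⟩ with hF
  set T : Finset (Sym2 (Fin n)) := {s(a₁,b₁), s(a₂,b₂), s(a₃,b₃)} with hT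
  have hTcard : T.card = 3 := by
    rw [hT, Finset.card_insert_of_notMem (by simp [d12, d13]),
      Finset.card_insert_of_notMem (by simp [d23]), Finset.card_singleton]
  set D : Finset (Sym2 (Fin n)) := S.sym2.filter (fun e => ¬ e.IsDiag) with hD
  have hmD : ∀ x y : Fin n, x ∈ S → y ∈ S → x ≠ y → s(x,y) ∈ D := by
    intro x y hx hy hxy
    rw [hD, Finset.mem_filter]
    exact ⟨Finset.mk_mem_sym2_iff.2 ⟨hx, hy⟩, by simpa using hxy⟩
  have hmemS : ∀ t : Fin n, t ∈ ({a₁, b₁, a₂, b₂, a₃, b₃} : Finset (Fin n)) → t ∈ S :=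
    fun t ht => hVS ht
  have hTD : T ⊆ D := by
    intro e he
    rw [hT] at he
    simp only [Finset.mem_insert, Finset.mem_singleton] at he
    rcases he with rfl | rfl | rfl
    · exact hmD _ _ (hmemS a₁ (by simp)) (hmemS b₁ (by simp)) h1
    · exact hmD _ _ (hmemS a₂ (by simp)) (hmemS b₂ (by simp)) h2
    · exact hmD _ _ (hmemS a₃ (by simp)) (hmemS b₃ (by simp)) h3
  have hDcard : D.card ≤ 6 := by
    have hsym2 : S.sym2.card = 10 := by
      rw [Finset.card_sym2, hS4]; decide
    have hsub : D ∪ S.image Sym2.diag ⊆ S.sym2 := by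
      intro e he
      rcases Finset.mem_union.1 he with he | he
      · exact (Finset.mem_filter.1 ((hD ▸ he : e ∈ S.sym2.filter _))).1
      · obtain ⟨x, hx, rfl⟩ := Finset.mem_image.1 he
        exact Finset.mk_mem_sym2_iff.2 ⟨hx, hx⟩
    have hdisj : Disjoint D (S.image Sym2.diag) := by
      rw [Finset.disjoint_right]
      intro e he hed
      obtain ⟨x, hx, rfl⟩ := Finset.mem_image.1 he
      have := (Finset.mem_filter.1 (hD ▸ hed)).2
      exact this (Sym2.diag_isDiag x)
    have hdiagcard : (S.image Sym2.diag).card = 4 := by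
      rw [Finset.card_image_of_injective _ Sym2.diag_injective, hS4]
    have := Finset.card_le_card hsub
    rw [Finset.card_union_of_disjoint hdisj, hdiagcard, hsym2] at this
    omega
  have hspan : spannedColors χ S ⊆ D.image F := by
    intro col hcol
    obtain ⟨e, he, rfl⟩ := Finset.mem_image.1 hcol
    rw [Finset.mem_filter, Finset.mem_product] at he
    obtain ⟨⟨hx, hy⟩, hxy⟩ := he
    exact Finset.mem_image.2 ⟨s(e.1, e.2), hmD _ _ hx hy hxy, Sym2.lift_mk _ _ _⟩
  have hFc : ∀ e ∈ T, F e = χ a₁ b₁ := by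
    intro e he
    rw [hT] at he
    simp only [Finset.mem_insert, Finset.mem_singleton] at he
    rcases he with rfl | rfl | rfl
    · rw [hF, Sym2.lift_mk]
    · rw [hF, Sym2.lift_mk]; exact c12.symm
    · rw [hF, Sym2.lift_mk]; exact (c12.trans c23).symm
  have himg : D.image F ⊆ insert (χ a₁ b₁) ((D \ T).image F) := by
    intro col hcol
    obtain ⟨e, he, rfl⟩ := Finset.mem_image.1 hcol
    by_cases heT : e ∈ T
    · rw [hFc e heT]; exact Finset.mem_insert_self _ _
    · exact Finset.mem_insert_of_mem
        (Finset.mem_image_of_mem _ (Finset.mem_sdiff.2 ⟨he, heT⟩))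
  have h5 : 5 ≤ (spannedColors χ S).card := hcol S hS4
  have hb1 := Finset.card_le_card hspan
  have hb2 := Finset.card_le_card himg
  have hb3 := Finset.card_insert_le (χ a₁ b₁) ((D \ T).image F)
  have hb4 := Finset.card_image_le (s := D \ T) (f := F)
  have hb5 := Finset.card_sdiff_of_subset hTD
  omega
end

section
/- Let n ≥ 4 and let χ be a (4, 5)-coloring of K_n. Suppose u, v, w are three distinct vertices with χ({u,v}) = χ({v,w}) (i.e., the color class of this common color has a component which is a path with two edges, with endpoints u and w). Then the edge {u,w} is an isolated edge in its own color class: every edge e ≠ {u,w} that shares a vertex with {u,w} satisfies χ(e) ≠ χ({u,w}). -/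
lemma card4_le (a b c d : ℕ) : ({a,b,c,d} : Finset ℕ).card ≤ 4 := by
  refine le_trans (Finset.card_insert_le _ _) (Nat.succ_le_succ ?_)
  refine le_trans (Finset.card_insert_le _ _) (Nat.succ_le_succ ?_)
  refine le_trans (Finset.card_insert_le _ _) (Nat.succ_le_succ ?_)
  simp

lemma spanned_sub {n : ℕ} (χ : Fin n → Fin n → ℕ) (hsym : ∀ i j, χ i j = χ j i)
    (a b c d : Fin n) :
    spannedColors χ {a,b,c,d} ⊆ {χ a b, χ a c, χ a d, χ b c, χ b d, χ c d} := by
  intro t ht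
  simp only [spannedColors, Finset.mem_image, Finset.mem_filter, Finset.mem_product,
    Finset.mem_insert, Finset.mem_singleton] at ht ⊢
  obtain ⟨⟨p, q⟩, ⟨⟨hp, hq⟩, hne⟩, rfl⟩ := ht
  dsimp only at hp hq hne ⊢
  rcases hp with rfl|rfl|rfl|rfl <;> rcases hq with rfl|rfl|rfl|rfl <;>
    first
    | exact absurd rfl hne
    | tauto
    | (rw [hsym]; tauto)

lemma four_colors {n : ℕ} (χ : Fin n → Fin n → ℕ) (hpq : IsPQColoring n 4 5 χ)
    (a b c d : Fin n) (hab : a ≠ b) (hac : a ≠ c) (had : a ≠ d)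
    (hbc : b ≠ c) (hbd : b ≠ d) (hcd : c ≠ d)
    (h : ({χ a b, χ a c, χ a d, χ b c, χ b d, χ c d} : Finset ℕ).card ≤ 4) : False := by
  have hcard : ({a,b,c,d} : Finset (Fin n)).card = 4 := by
    rw [Finset.card_insert_of_notMem (by simp [hab, hac, had]),
        Finset.card_insert_of_notMem (by simp [hbc, hbd]),
        Finset.card_insert_of_notMem (by simp [hcd]), Finset.card_singleton]
  have h5 := hpq.2 _ hcard
  have := (h5.trans (Finset.card_le_card (spanned_sub χ hpq.1 a b c d))).trans h
  omega

/-- In a (4,5)-coloring of K_n (n ≥ 4), if χ({u,v}) = χ({v,w}) for distinct u, v, w,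
then the edge {u,w} is an isolated edge in its own color class: every other edge
sharing a vertex with {u,w} gets a different color. -/
theorem third_edge_isolated_in_color_class :
    ∀ (n : ℕ), 4 ≤ n → ∀ χ : Fin n → Fin n → ℕ, IsPQColoring n 4 5 χ →
    ∀ u v w : Fin n, u ≠ v → v ≠ w → u ≠ w → χ u v = χ v w →
    ∀ x y : Fin n, x ≠ y → s(x, y) ≠ s(u, w) →
      (x = u ∨ x = w ∨ y = u ∨ y = w) → χ x y ≠ χ u w := by
  intro n hn χ hpq u v w huv hvw huw hpath x y hxy hne hshare heq
  have hsym := hpq.1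
  -- extract z : the endpoint of {x,y} not in {u,w}, with χ u z = χ u w or χ w z = χ u w
  have hz : ∃ z : Fin n, z ≠ u ∧ z ≠ w ∧ (χ u z = χ u w ∨ χ w z = χ u w) := by
    rcases hshare with rfl | rfl | rfl | rfl
    · exact ⟨y, Ne.symm hxy, fun h => hne (by rw [h]), Or.inl heq⟩
    · exact ⟨y, fun h => hne (by rw [h, Sym2.eq_swap]), Ne.symm hxy, Or.inr heq⟩
    · exact ⟨x, hxy, fun h => hne (by rw [h, Sym2.eq_swap]), Or.inl (by rw [hsym]; exact heq)⟩
    · exact ⟨x, fun h => hne (by rw [h]), hxy, Or.inr (by rw [hsym]; exact heq)⟩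
  obtain ⟨z, hzu, hzw, hz⟩ := hz
  by_cases hzv : z = v
  · -- then χ u w = χ u v, so all three edges of the triangle u v w share one color
    subst hzv
    have hall : χ u w = χ u z := by
      rcases hz with h | h
      · exact h.symm
      · rw [← h, hsym]; exact hpath.symm
    -- pick a fourth vertex t
    have hex : ∃ t : Fin n, t ∉ ({u, z, w} : Finset (Fin n)) := by
      by_contra hc
      push_neg at hc
      have hsub : (Finset.univ : Finset (Fin n)) ⊆ {u, z, w} := fun t _ => hc t
      have := Finset.card_le_card hsub
      simp only [Finset.card_univ, Fintype.card_fin] at this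
      have h3 : ({u, z, w} : Finset (Fin n)).card ≤ 3 := by
        refine le_trans (Finset.card_insert_le _ _) (Nat.succ_le_succ ?_)
        refine le_trans (Finset.card_insert_le _ _) (Nat.succ_le_succ ?_)
        simp
      omega
    obtain ⟨t, ht⟩ := hex
    simp only [Finset.mem_insert, Finset.mem_singleton, not_or] at ht
    obtain ⟨htu, htz, htw⟩ := ht
    refine four_colors χ hpq u z w t huv huw (Ne.symm htu) hvw (Ne.symm htz) (Ne.symm htw) ?_
    refine le_trans (Finset.card_le_card ?_) (card4_le (χ u z) (χ u t) (χ z t) (χ w t))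
    intro s hs
    simp only [Finset.mem_insert, Finset.mem_singleton] at hs ⊢
    rw [hall, ← hpath] at hs
    tauto
  · -- S = {u, v, w, z}
    refine four_colors χ hpq u v w z huv huw hzu.symm hvw (fun h => hzv h.symm) hzw.symm ?_
    rcases hz with h | h
    · refine le_trans (Finset.card_le_card ?_) (card4_le (χ u v) (χ u w) (χ v z) (χ w z))
      intro s hs
      simp only [Finset.mem_insert, Finset.mem_singleton] at hs ⊢
      rw [← hpath, h] at hs
      tauto
    · refine le_trans (Finset.card_le_card ?_) (card4_le (χ u v) (χ u w) (χ u z) (χ v z))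
      intro s hs
      simp only [Finset.mem_insert, Finset.mem_singleton] at hs ⊢
      rw [← hpath, h] at hs
      tauto
end

section
/- For every t with 0 ≤ t < 1/6, the derivative of a satisfies a′(t) = −(5·a(t)·d(t))/(2·q(t)·c(t)) − (6·a(t)²·z₂(t))/(q(t)·c(t)) − (2·a(t)·y(t))/q(t). -/
noncomputable def pFun (t : ℝ) : ℝ := 1 - 6 * t

noncomputable def rFun (s t : ℝ) : ℝ := Real.exp (-(7776 / 25) * (1 - s) ^ 2 * t ^ 3)

noncomputable def qFun (t : ℝ) : ℝ := pFun t ^ 3 / 6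

noncomputable def yFun (t : ℝ) : ℝ := pFun t ^ 2

noncomputable def aFun (s t : ℝ) : ℝ := (5 / 6) * s * (1 - s) ^ 2 * pFun t ^ 5 * rFun s t ^ 2

noncomputable def c1Fun (s t : ℝ) : ℝ := (5 / 6) * s * (1 - s) * pFun t ^ 2 * rFun s t

noncomputable def c2Fun (s t : ℝ) : ℝ := (5 / 6) * (1 - s) ^ 2 * pFun t ^ 3 * rFun s t ^ 2

noncomputable def cFun (s t : ℝ) : ℝ := c1Fun s t * c2Fun s t

noncomputable def dFun (s t : ℝ) : ℝ := (5 / 6) * s * (1 - s) ^ 3 * pFun t ^ 7 * rFun s t ^ 3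

noncomputable def z0Fun (s t : ℝ) : ℝ := (5 / 6) * (1 - s) ^ 5 * pFun t ^ 9 * rFun s t ^ 3

noncomputable def z1Fun (s t : ℝ) : ℝ := (1 - s) ^ 4 * (1 - pFun t) * pFun t ^ 6 * rFun s t ^ 2

noncomputable def z2Fun (s t : ℝ) : ℝ :=
  (6 / 5) * (1 - s) ^ 3 * (1 - pFun t) ^ 2 * pFun t ^ 3 * rFun s t

/-!
Since `a = const · p⁵ · r²`, its logarithmic derivative is `a'/a = 5p'/p + 2r'/r
= -30/p - (46656/25)(1-s)²t²`. On the other side, the ratios `d/c`, `a/c` and `y/q` are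
monomials in `p` and `r`, and `1 - p = 6t`, so the three terms of the claimed formula are
`a` times `-18/p`, `-(46656/25)(1-s)²t²` and `-12/p` respectively.
-/

theorem hasDerivAt_pFun (t : ℝ) : HasDerivAt pFun (-6) t := by
  show HasDerivAt (fun x => 1 - 6 * x) (-6) t
  simpa using ((hasDerivAt_id t).const_mul (6 : ℝ)).const_sub 1

theorem one_sub_pFun (t : ℝ) : 1 - pFun t = 6 * t := by
  unfold pFun; ring

theorem rFun_ne_zero (s t : ℝ) : rFun s t ≠ 0 := Real.exp_ne_zero _

theorem hasDerivAt_rFun (s t : ℝ) :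
    HasDerivAt (rFun s) (-(23328 / 25) * (1 - s) ^ 2 * t ^ 2 * rFun s t) t := by
  refine ((hasDerivAt_pow 3 t).const_mul (-(7776 / 25) * (1 - s) ^ 2)).exp.congr_deriv ?_
  simp only [rFun]; norm_num; ring

theorem hasDerivAt_aFun (s : ℝ) {t : ℝ} (hp : pFun t ≠ 0) :
    HasDerivAt (aFun s)
      (-(30 / pFun t + (46656 / 25) * (1 - s) ^ 2 * t ^ 2) * aFun s t) t := by
  have := (((hasDerivAt_pFun t).fun_pow 5).fun_mul ((hasDerivAt_rFun s t).fun_pow 2)).const_mul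
    ((5 / 6) * s * (1 - s) ^ 2)
  refine (this.congr_of_eventuallyEq (.of_forall fun u => ?_)).congr_deriv ?_
  · unfold aFun; ring
  · unfold aFun; field_simp; ring

theorem dFun_div_cFun {s t : ℝ} (hs0 : s ≠ 0) (hs1 : s ≠ 1) (hp : pFun t ≠ 0) :
    dFun s t / cFun s t = 6 / 5 * pFun t ^ 2 := by
  have := rFun_ne_zero s t
  have : 1 - s ≠ 0 := sub_ne_zero.mpr hs1.symm
  unfold dFun cFun c1Fun c2Fun
  field_simp

theorem aFun_div_cFun {s t : ℝ} (hs0 : s ≠ 0) (hs1 : s ≠ 1) (hp : pFun t ≠ 0) :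
    aFun s t / cFun s t = 6 / (5 * (1 - s) * rFun s t) := by
  have := rFun_ne_zero s t
  have : 1 - s ≠ 0 := sub_ne_zero.mpr hs1.symm
  unfold aFun cFun c1Fun c2Fun
  field_simp

theorem yFun_div_qFun (t : ℝ) : yFun t / qFun t = 6 / pFun t := by
  unfold yFun qFun
  rcases eq_or_ne (pFun t) 0 with hp | hp
  · simp [hp]
  · field_simp

theorem a_hasDerivAt_general (s : ℝ) (hs0 : 0 < s) (hs1 : s < 1) (t : ℝ)
    (ht : t < 1 / 6) :
    HasDerivAt (aFun s)
      (-(5 * aFun s t * dFun s t) / (2 * qFun t * cFun s t)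
        - (6 * aFun s t ^ 2 * z2Fun s t) / (qFun t * cFun s t)
        - (2 * aFun s t * yFun t) / qFun t) t := by
  have hp : pFun t ≠ 0 := by unfold pFun; linarith
  refine (hasDerivAt_aFun s hp).congr_deriv (Eq.symm ?_)
  calc _ = -(5 / 2) * aFun s t * (dFun s t / cFun s t) / qFun t
          - 6 * aFun s t * (aFun s t / cFun s t) * z2Fun s t / qFun t
          - 2 * aFun s t * (yFun t / qFun t) := by ring
    _ = _ := by
      rw [dFun_div_cFun hs0.ne' hs1.ne hp, aFun_div_cFun hs0.ne' hs1.ne hp, yFun_div_qFun]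
      have := rFun_ne_zero s t
      have : 1 - s ≠ 0 := by linarith
      unfold qFun z2Fun
      rw [one_sub_pFun]
      field_simp
      ring

theorem a_hasDerivAt (s : ℝ) (hs0 : 0 < s) (hs1 : s < 1) (t : ℝ)
    (ht0 : 0 ≤ t) (ht : t < 1 / 6) :
    HasDerivAt (aFun s)
      (-(5 * aFun s t * dFun s t) / (2 * qFun t * cFun s t)
        - (6 * aFun s t ^ 2 * z2Fun s t) / (qFun t * cFun s t)
        - (2 * aFun s t * yFun t) / qFun t) t :=
  a_hasDerivAt_general s hs0 hs1 t ht
end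

section
/- For every t with 0 ≤ t < 1/6, the derivative of c₁ satisfies c₁′(t) = −(5·d(t)·c₁(t))/(3·q(t)·c(t)) − (3·a(t)·z₂(t)·c₁(t))/(q(t)·c(t)). -/
theorem hasDerivAt_c1Fun (s t : ℝ) :
    HasDerivAt (c1Fun s)
      (-10 * s * (1 - s) * pFun t * rFun s t
        - (3888 / 5) * s * (1 - s) ^ 3 * t ^ 2 * pFun t ^ 2 * rFun s t) t := by
  have h := (((hasDerivAt_pFun t).pow 2).const_mul (5 / 6 * s * (1 - s))).mul (hasDerivAt_rFun s t)
  exact h.congr_deriv (by simp only [Pi.pow_apply, Nat.cast_ofNat]; ring)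

section Quotients

variable {s t : ℝ}

theorem dFun_mul_c1Fun_div (hs0 : s ≠ 0) (hs1 : s ≠ 1) (hp : pFun t ≠ 0) :
    dFun s t * c1Fun s t / (qFun t * cFun s t) = 6 * s * (1 - s) * pFun t * rFun s t := by
  have hs1' : 1 - s ≠ 0 := sub_ne_zero.mpr hs1.symm
  have hr : rFun s t ≠ 0 := Real.exp_ne_zero _
  simp only [dFun, qFun, cFun, c1Fun, c2Fun]
  field_simp

theorem aFun_mul_z2Fun_mul_c1Fun_div (hs0 : s ≠ 0) (hs1 : s ≠ 1) (hp : pFun t ≠ 0) :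
    aFun s t * z2Fun s t * c1Fun s t / (qFun t * cFun s t)
      = (36 / 5) * s * (1 - s) ^ 3 * (1 - pFun t) ^ 2 * pFun t ^ 2 * rFun s t := by
  have hs1' : 1 - s ≠ 0 := sub_ne_zero.mpr hs1.symm
  have hr : rFun s t ≠ 0 := Real.exp_ne_zero _
  simp only [aFun, z2Fun, qFun, cFun, c1Fun, c2Fun]
  field_simp
  ring

end Quotients

theorem c1_hasDerivAt_general (s : ℝ) (hs0 : 0 < s) (hs1 : s < 1) (t : ℝ)
    (ht : t < 1 / 6) :
    HasDerivAt (c1Fun s)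
      (-(5 * dFun s t * c1Fun s t) / (3 * qFun t * cFun s t)
        - (3 * aFun s t * z2Fun s t * c1Fun s t) / (qFun t * cFun s t)) t := by
  have hp : pFun t ≠ 0 := by rw [pFun]; linarith
  have hd := dFun_mul_c1Fun_div hs0.ne' hs1.ne hp
  have hz := aFun_mul_z2Fun_mul_c1Fun_div hs0.ne' hs1.ne hp
  have h1p : 1 - pFun t = 6 * t := by rw [pFun]; ring
  have hsplit : -(5 * dFun s t * c1Fun s t) / (3 * qFun t * cFun s t)
        - (3 * aFun s t * z2Fun s t * c1Fun s t) / (qFun t * cFun s t)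
      = -(5 / 3) * (dFun s t * c1Fun s t / (qFun t * cFun s t))
        - 3 * (aFun s t * z2Fun s t * c1Fun s t / (qFun t * cFun s t)) := by ring
  rw [hsplit, hd, hz, h1p]
  refine (hasDerivAt_c1Fun s t).congr_deriv ?_
  ring

theorem c1_hasDerivAt (s : ℝ) (hs0 : 0 < s) (hs1 : s < 1) (t : ℝ)
    (ht0 : 0 ≤ t) (ht : t < 1 / 6) :
    HasDerivAt (c1Fun s)
      (-(5 * dFun s t * c1Fun s t) / (3 * qFun t * cFun s t)
        - (3 * aFun s t * z2Fun s t * c1Fun s t) / (qFun t * cFun s t)) t :=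
  c1_hasDerivAt_general s hs0 hs1 t ht
end

section
/- For every t with 0 ≤ t < 1/6, the derivative of c₂ satisfies c₂′(t) = −(5·d(t)·c₂(t))/(2·q(t)·c(t)) − (6·a(t)·z₂(t)·c₂(t))/(q(t)·c(t)). -/
theorem rFun_pos (s t : ℝ) : 0 < rFun s t := Real.exp_pos _

theorem hasDerivAt_c2Fun (s : ℝ) {t : ℝ} (hp : pFun t ≠ 0) :
    HasDerivAt (c2Fun s) ((-18 / pFun t - 46656 / 25 * (1 - s) ^ 2 * t ^ 2) * c2Fun s t) t := by
  have h := (((hasDerivAt_pFun t).pow 3).mul ((hasDerivAt_rFun s t).pow 2)).const_mul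
    (5 / 6 * (1 - s) ^ 2)
  have hc2 : c2Fun s = fun u ↦ 5 / 6 * (1 - s) ^ 2 * (pFun u ^ 3 * rFun s u ^ 2) := by
    funext u
    simp only [c2Fun]
    ring
  rw [hc2]
  refine h.congr_deriv ?_
  simp only [Pi.pow_apply]
  norm_num
  field_simp
  ring

section Quotients

variable {s t : ℝ}

theorem five_dFun_div_qFun_mul_c1Fun (hs : s ≠ 0) (hs' : 1 - s ≠ 0) (hp : pFun t ≠ 0) :
    5 * dFun s t / (2 * qFun t * c1Fun s t) = 18 / pFun t * c2Fun s t := by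
  have hr := (rFun_pos s t).ne'
  simp only [dFun, qFun, c1Fun, c2Fun]
  field_simp
  ring

theorem six_aFun_mul_z2Fun_div_qFun_mul_c1Fun (hs : s ≠ 0) (hs' : 1 - s ≠ 0)
    (hp : pFun t ≠ 0) :
    6 * aFun s t * z2Fun s t / (qFun t * c1Fun s t)
      = 46656 / 25 * (1 - s) ^ 2 * t ^ 2 * c2Fun s t := by
  have hr := (rFun_pos s t).ne'
  have hp1 : 1 - pFun t = 6 * t := by simp only [pFun]; ring
  simp only [aFun, z2Fun, qFun, c1Fun, c2Fun, hp1]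
  field_simp
  ring

end Quotients

theorem c2_hasDerivAt_general (s : ℝ) (hs0 : 0 < s) (hs1 : s < 1) (t : ℝ)
    (ht : t < 1 / 6) :
    HasDerivAt (c2Fun s)
      (-(5 * dFun s t * c2Fun s t) / (2 * qFun t * cFun s t)
        - (6 * aFun s t * z2Fun s t * c2Fun s t) / (qFun t * cFun s t)) t := by
  have hs : s ≠ 0 := hs0.ne'
  have hs' : 1 - s ≠ 0 := sub_ne_zero.2 hs1.ne'
  have hp : pFun t ≠ 0 := by simp only [pFun]; linarith
  have hc2 : c2Fun s t ≠ 0 := by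
    have hr := (rFun_pos s t).ne'
    simp only [c2Fun]
    positivity
  convert hasDerivAt_c2Fun s hp using 1
  simp only [cFun, ← mul_assoc]
  rw [neg_div, mul_div_mul_right _ _ hc2, mul_div_mul_right _ _ hc2,
    five_dFun_div_qFun_mul_c1Fun hs hs' hp, six_aFun_mul_z2Fun_div_qFun_mul_c1Fun hs hs' hp]
  ring

theorem c2_hasDerivAt (s : ℝ) (hs0 : 0 < s) (hs1 : s < 1) (t : ℝ)
    (ht0 : 0 ≤ t) (ht : t < 1 / 6) :
    HasDerivAt (c2Fun s)
      (-(5 * dFun s t * c2Fun s t) / (2 * qFun t * cFun s t)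
        - (6 * aFun s t * z2Fun s t * c2Fun s t) / (qFun t * cFun s t)) t :=
  c2_hasDerivAt_general s hs0 hs1 t ht
end

section
/- For every t with 0 ≤ t < 1/6, the derivative of z₂ satisfies z₂′(t) = (2·a(t)·z₁(t))/(q(t)·c(t)) − (5·d(t)·z₂(t))/(3·q(t)·c(t)) − (3·a(t)·z₂(t)²)/(q(t)·c(t)) − (y(t)·z₂(t))/q(t). -/
noncomputable def z2Deriv (s t : ℝ) : ℝ :=
  (72 / 5) * (1 - s) ^ 3 * (1 - pFun t) * pFun t ^ 3 * rFun s t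
    - (108 / 5) * (1 - s) ^ 3 * (1 - pFun t) ^ 2 * pFun t ^ 2 * rFun s t
    - (139968 / 125) * (1 - s) ^ 5 * t ^ 2 * (1 - pFun t) ^ 2 * pFun t ^ 3 * rFun s t

theorem hasDerivAt_z2Fun (s t : ℝ) : HasDerivAt (z2Fun s) (z2Deriv s t) t := by
  have hp := hasDerivAt_pFun t
  refine ((((hp.const_sub 1).pow 2).const_mul ((6 / 5) * (1 - s) ^ 3)).mul (hp.pow 3)).mul
    (hasDerivAt_rFun s t) |>.congr_deriv ?_
  simp only [z2Deriv, Pi.mul_apply, Pi.pow_apply]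
  push_cast
  ring

theorem z2Deriv_eq {s t : ℝ} (hs0 : s ≠ 0) (hs1 : 1 - s ≠ 0) (hp : pFun t ≠ 0) :
    z2Deriv s t =
      (2 * aFun s t * z1Fun s t) / (qFun t * cFun s t)
        - (5 * dFun s t * z2Fun s t) / (3 * qFun t * cFun s t)
        - (3 * aFun s t * z2Fun s t ^ 2) / (qFun t * cFun s t)
        - (yFun t * z2Fun s t) / qFun t := by
  have hr : rFun s t ≠ 0 := Real.exp_ne_zero _
  have h1p : 1 - pFun t = 6 * t := by simp only [pFun]; ring
  simp only [z2Deriv, aFun, z1Fun, z2Fun, qFun, cFun, c1Fun, c2Fun, dFun, yFun, h1p]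
  field_simp
  ring

theorem z2_hasDerivAt_general (s : ℝ) (hs0 : 0 < s) (hs1 : s < 1) (t : ℝ)
    (ht : t < 1 / 6) :
    HasDerivAt (z2Fun s)
      ((2 * aFun s t * z1Fun s t) / (qFun t * cFun s t)
        - (5 * dFun s t * z2Fun s t) / (3 * qFun t * cFun s t)
        - (3 * aFun s t * z2Fun s t ^ 2) / (qFun t * cFun s t)
        - (yFun t * z2Fun s t) / qFun t) t := by
  have hp : pFun t ≠ 0 := by rw [pFun]; linarith
  exact (hasDerivAt_z2Fun s t).congr_deriv
    (z2Deriv_eq hs0.ne' (sub_ne_zero.mpr hs1.ne') hp)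

theorem z2_hasDerivAt (s : ℝ) (hs0 : 0 < s) (hs1 : s < 1) (t : ℝ)
    (ht0 : 0 ≤ t) (ht : t < 1 / 6) :
    HasDerivAt (z2Fun s)
      ((2 * aFun s t * z1Fun s t) / (qFun t * cFun s t)
        - (5 * dFun s t * z2Fun s t) / (3 * qFun t * cFun s t)
        - (3 * aFun s t * z2Fun s t ^ 2) / (qFun t * cFun s t)
        - (yFun t * z2Fun s t) / qFun t) t :=
  z2_hasDerivAt_general s hs0 hs1 t ht
end
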